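/- arXiv:cs/0207029 — 5 statements merged into one kernel-verified Lean document; each statement's English description precedes it below -/
import Mathlib

section
/- Let α be a type, c a closure operator on Set α, A ∈ α, and F a flock all of whose bases are finite. Then the epistemic state generated by F, contracted by A, equals the epistemic state generated by the contracted flock F − A; concretely, the two sets of admissible belief states coincide: {Γ : Set α | (∃ Δ ∈ F, Γ ⊆ Δ) ∧ A ∉ c Γ} = {Γ : Set α | ∃ Δ' ∈ F − A, Γ ⊆ Δ'} (and the labelling Γ ↦ c Γ and preference Γ ⊊ Φ agree on them by definition). -/
/-! Since a base is finite, each subset of it not implying `A` extends to a maximal such subset,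
i.e. to a member of `F − A`; conversely, subsets of members of `F − A` do not imply `A` by
monotonicity of `c`. -/

/-- The contraction of a flock `F` by `A`: all maximal subsets of members of `F`
that do not imply `A`. -/
def flockContract {α : Type*} (c : ClosureOperator (Set α)) (F : Set (Set α)) (A : α) :
    Set (Set α) :=
  {Δ' : Set α | ∃ Δ ∈ F, Δ' ⊆ Δ ∧ A ∉ c Δ' ∧ ∀ Ψ : Set α, Δ' ⊂ Ψ → Ψ ⊆ Δ → A ∈ c Ψ}

theorem Set.Finite.exists_maximal_subset_superset {α : Type*} {P : Set α → Prop}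
    {Γ Δ : Set α} (hΔ : Δ.Finite) (hΓΔ : Γ ⊆ Δ) (hΓ : P Γ) :
    ∃ Δ', Γ ⊆ Δ' ∧ Maximal (fun X => X ⊆ Δ ∧ P X) Δ' :=
  (hΔ.finite_subsets.subset fun _ hX => hX.1).exists_le_maximal
    (s := {X | X ⊆ Δ ∧ P X}) ⟨hΓΔ, hΓ⟩

theorem exists_mem_flockContract_superset {α : Type*} {c : ClosureOperator (Set α)}
    {F : Set (Set α)} {A : α} {Γ Δ : Set α} (hΔF : Δ ∈ F) (hΔ : Δ.Finite) (hΓΔ : Γ ⊆ Δ)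
    (hA : A ∉ c Γ) : ∃ Δ' ∈ flockContract c F A, Γ ⊆ Δ' := by
  obtain ⟨Δ', hΓΔ', hmax⟩ :=
    hΔ.exists_maximal_subset_superset (P := fun X => A ∉ c X) hΓΔ hA
  refine ⟨Δ', ⟨Δ, hΔF, hmax.prop.1, hmax.prop.2, fun Ψ hΔ'Ψ hΨΔ => ?_⟩, hΓΔ'⟩
  by_contra hAΨ
  exact hmax.not_prop_of_gt hΔ'Ψ ⟨hΨΔ, hAΨ⟩

/-- For a flock `F` all of whose bases are finite, the contraction by `A`
of the epistemic state generated by `F` coincides with the epistemic state generated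
by the contracted flock `F − A`: their sets of admissible belief states are equal. -/
theorem flock_contraction_generates_contracted_state (α : Type*)
    (c : ClosureOperator (Set α)) (A : α) (F : Set (Set α))
    (hF : ∀ Δ ∈ F, Set.Finite Δ) :
    {Γ : Set α | (∃ Δ ∈ F, Γ ⊆ Δ) ∧ A ∉ c Γ}
      = {Γ : Set α | ∃ Δ' ∈ flockContract c F A, Γ ⊆ Δ'} := by
  ext Γ
  constructor
  · rintro ⟨⟨Δ, hΔF, hΓΔ⟩, hA⟩
    exact exists_mem_flockContract_superset hΔF (hF Δ hΔF) hΓΔ hA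
  · rintro ⟨Δ', ⟨Δ, hΔF, hΔ'Δ, hA, -⟩, hΓΔ'⟩
    exact ⟨⟨Δ, hΔF, hΓΔ'.trans hΔ'Δ⟩, fun h => hA (c.monotone hΓΔ' h)⟩
end

section
/- Let α be a type, c a closure operator on Set α, A, B ∈ α, and F a flock all of whose bases are finite. Then contraction of flocks is commutative at the level of generated epistemic states: the flocks (F − A) − B and (F − B) − A generate the same epistemic state; concretely, {Γ : Set α | ∃ Δ ∈ (F − A) − B, Γ ⊆ Δ} = {Γ : Set α | ∃ Δ ∈ (F − B) − A, Γ ⊆ Δ}, and both equal {Γ : Set α | (∃ Δ ∈ F, Γ ⊆ Δ) ∧ A ∉ c Γ ∧ B ∉ c Γ}. -/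
section FlockContract

variable {α : Type*} (c : ClosureOperator (Set α))

theorem exists_superset_mem_flockContract {F : Set (Set α)} {A : α} {Δ Γ : Set α}
    (hΔF : Δ ∈ F) (hΔ : Δ.Finite) (hΓΔ : Γ ⊆ Δ) (hA : A ∉ c Γ) :
    ∃ Δ' ∈ flockContract c F A, Γ ⊆ Δ' := by
  have hfin : {Ψ | Ψ ⊆ Δ ∧ A ∉ c Ψ}.Finite := hΔ.finite_subsets.subset fun _ h ↦ h.1
  obtain ⟨Δ', hΓΔ', hmax⟩ := hfin.exists_le_maximal (a := Γ) ⟨hΓΔ, hA⟩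
  refine ⟨Δ', ⟨Δ, hΔF, hmax.prop.1, hmax.prop.2, fun Ψ hlt hΨΔ ↦ ?_⟩, hΓΔ'⟩
  by_contra hΨ
  exact hmax.not_gt ⟨hΨΔ, hΨ⟩ hlt

theorem finite_of_mem_flockContract {F : Set (Set α)} (hF : ∀ Δ ∈ F, Δ.Finite) {A : α} :
    ∀ Δ' ∈ flockContract c F A, Δ'.Finite := by
  rintro Δ' ⟨Δ, hΔF, hΔ'Δ, -⟩
  exact (hF Δ hΔF).subset hΔ'Δ

theorem exists_superset_mem_flockContract_iff {F : Set (Set α)} (hF : ∀ Δ ∈ F, Δ.Finite)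
    (A : α) (Γ : Set α) :
    (∃ Δ' ∈ flockContract c F A, Γ ⊆ Δ') ↔ (∃ Δ ∈ F, Γ ⊆ Δ) ∧ A ∉ c Γ := by
  constructor
  · rintro ⟨Δ', ⟨Δ, hΔF, hΔ'Δ, hA, -⟩, hΓΔ'⟩
    exact ⟨⟨Δ, hΔF, hΓΔ'.trans hΔ'Δ⟩, fun h ↦ hA (c.monotone hΓΔ' h)⟩
  · rintro ⟨⟨Δ, hΔF, hΓΔ⟩, hA⟩
    exact exists_superset_mem_flockContract c hΔF (hF Δ hΔF) hΓΔ hA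

theorem exists_superset_mem_flockContract_flockContract_iff {F : Set (Set α)}
    (hF : ∀ Δ ∈ F, Δ.Finite) (A B : α) (Γ : Set α) :
    (∃ Δ ∈ flockContract c (flockContract c F A) B, Γ ⊆ Δ) ↔
      (∃ Δ ∈ F, Γ ⊆ Δ) ∧ A ∉ c Γ ∧ B ∉ c Γ := by
  rw [exists_superset_mem_flockContract_iff c (finite_of_mem_flockContract c hF),
    exists_superset_mem_flockContract_iff c hF, and_assoc]

end FlockContract

/-- For a flock `F` all of whose bases are finite, contraction of flocks
is commutative at the level of generated epistemic states: `(F − A) − B` and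
`(F − B) − A` generate the same epistemic state, and both equal the state obtained
from `F` by removing all admissible states implying `A` or `B`. -/
theorem flock_contraction_commutes (α : Type*) (c : ClosureOperator (Set α))
    (A B : α) (F : Set (Set α)) (hF : ∀ Δ ∈ F, Set.Finite Δ) :
    {Γ : Set α | ∃ Δ ∈ flockContract c (flockContract c F A) B, Γ ⊆ Δ}
        = {Γ : Set α | ∃ Δ ∈ flockContract c (flockContract c F B) A, Γ ⊆ Δ} ∧
    {Γ : Set α | ∃ Δ ∈ flockContract c (flockContract c F A) B, Γ ⊆ Δ}
        = {Γ : Set α | (∃ Δ ∈ F, Γ ⊆ Δ) ∧ A ∉ c Γ ∧ B ∉ c Γ} := by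
  have hAB := exists_superset_mem_flockContract_flockContract_iff c hF A B
  have hBA := exists_superset_mem_flockContract_flockContract_iff c hF B A
  exact ⟨Set.ext fun Γ ↦ (hAB Γ).trans ((and_congr_right' and_comm).trans (hBA Γ).symm),
    Set.ext hAB⟩
end

section
/- Let α be a type, c a closure operator on Set α, and Δ₁, Δ₂ ⊆ α disjoint sets (Δ₁ ∩ Δ₂ = ∅). Then the pure merge of the epistemic states generated by the bases Δ₁ and Δ₂ is isomorphic to the epistemic state generated by the base Δ₁ ∪ Δ₂: the map (Γ₁, Γ₂) ↦ Γ₁ ∪ Γ₂ is a bijection from {Γ₁ | Γ₁ ⊆ Δ₁} × {Γ₂ | Γ₂ ⊆ Δ₂} onto {Γ | Γ ⊆ Δ₁ ∪ Δ₂}, it preserves labels, i.e. c (c Γ₁ ∪ c Γ₂) = c (Γ₁ ∪ Γ₂), and it is an order isomorphism: Γ₁ ∪ Γ₂ ⊆ Φ₁ ∪ Φ₂ ↔ (Γ₁ ⊆ Φ₁ ∧ Γ₂ ⊆ Φ₂) for all Γ₁, Φ₁ ⊆ Δ₁ and Γ₂, Φ₂ ⊆ Δ₂. -/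
namespace Set

variable {α : Type*}

theorem union_subset_union_iff_of_disjoint {Γ₁ Γ₂ Φ₁ Φ₂ : Set α}
    (h₁ : Disjoint Γ₁ Φ₂) (h₂ : Disjoint Γ₂ Φ₁) :
    Γ₁ ∪ Γ₂ ⊆ Φ₁ ∪ Φ₂ ↔ Γ₁ ⊆ Φ₁ ∧ Γ₂ ⊆ Φ₂ := by
  refine ⟨fun h => ⟨?_, ?_⟩, fun h => union_subset_union h.1 h.2⟩
  · exact h₁.subset_left_of_subset_union (subset_union_left.trans h)
  · exact h₂.subset_right_of_subset_union (subset_union_right.trans h)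

theorem union_subset_union_iff_of_subset_disjoint {Δ₁ Δ₂ Γ₁ Γ₂ Φ₁ Φ₂ : Set α}
    (hΔ : Disjoint Δ₁ Δ₂) (hΓ₁ : Γ₁ ⊆ Δ₁) (hΦ₁ : Φ₁ ⊆ Δ₁) (hΓ₂ : Γ₂ ⊆ Δ₂) (hΦ₂ : Φ₂ ⊆ Δ₂) :
    Γ₁ ∪ Γ₂ ⊆ Φ₁ ∪ Φ₂ ↔ Γ₁ ⊆ Φ₁ ∧ Γ₂ ⊆ Φ₂ :=
  union_subset_union_iff_of_disjoint (hΔ.mono hΓ₁ hΦ₂) (hΔ.symm.mono hΓ₂ hΦ₁)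

theorem bijOn_union_of_disjoint {Δ₁ Δ₂ : Set α} (hΔ : Disjoint Δ₁ Δ₂) :
    BijOn (fun p : Set α × Set α => p.1 ∪ p.2)
      ({Γ₁ | Γ₁ ⊆ Δ₁} ×ˢ {Γ₂ | Γ₂ ⊆ Δ₂}) {Γ | Γ ⊆ Δ₁ ∪ Δ₂} := by
  refine ⟨fun p hp => union_subset_union hp.1 hp.2, ?_, ?_⟩
  · rintro ⟨Γ₁, Γ₂⟩ ⟨hΓ₁, hΓ₂⟩ ⟨Φ₁, Φ₂⟩ ⟨hΦ₁, hΦ₂⟩ (h : Γ₁ ∪ Γ₂ = Φ₁ ∪ Φ₂)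
    have hle := (union_subset_union_iff_of_subset_disjoint hΔ hΓ₁ hΦ₁ hΓ₂ hΦ₂).1 h.le
    have hge := (union_subset_union_iff_of_subset_disjoint hΔ hΦ₁ hΓ₁ hΦ₂ hΓ₂).1 h.ge
    exact Prod.ext (hle.1.antisymm hge.1) (hle.2.antisymm hge.2)
  · intro Γ (hΓ : Γ ⊆ Δ₁ ∪ Δ₂)
    refine ⟨(Γ ∩ Δ₁, Γ ∩ Δ₂), ⟨inter_subset_right, inter_subset_right⟩, ?_⟩
    exact (inter_union_distrib_left Γ Δ₁ Δ₂).symm.trans (inter_eq_left.2 hΓ)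

end Set

/-- For disjoint bases `Δ₁`, `Δ₂`, the pure merge of the epistemic states
generated by `Δ₁` and `Δ₂` is isomorphic to the epistemic state generated by
`Δ₁ ∪ Δ₂`: the map `(Γ₁, Γ₂) ↦ Γ₁ ∪ Γ₂` is a bijection between the sets of
admissible states, it preserves labels (`c (c Γ₁ ∪ c Γ₂) = c (Γ₁ ∪ Γ₂)`), and it is
an order isomorphism for the componentwise preference. -/
theorem merge_of_base_states_iso_union_base (α : Type*) (c : ClosureOperator (Set α))
    (Δ₁ Δ₂ : Set α) (hdisj : Δ₁ ∩ Δ₂ = ∅) :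
    Set.BijOn (fun p : Set α × Set α => p.1 ∪ p.2)
        ({Γ₁ : Set α | Γ₁ ⊆ Δ₁} ×ˢ {Γ₂ : Set α | Γ₂ ⊆ Δ₂})
        {Γ : Set α | Γ ⊆ Δ₁ ∪ Δ₂} ∧
    (∀ Γ₁ Γ₂ : Set α, Γ₁ ⊆ Δ₁ → Γ₂ ⊆ Δ₂ → c (c Γ₁ ∪ c Γ₂) = c (Γ₁ ∪ Γ₂)) ∧
    (∀ Γ₁ Φ₁ Γ₂ Φ₂ : Set α, Γ₁ ⊆ Δ₁ → Φ₁ ⊆ Δ₁ → Γ₂ ⊆ Δ₂ → Φ₂ ⊆ Δ₂ →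
      (Γ₁ ∪ Γ₂ ⊆ Φ₁ ∪ Φ₂ ↔ Γ₁ ⊆ Φ₁ ∧ Γ₂ ⊆ Φ₂)) := by
  have hΔ : Disjoint Δ₁ Δ₂ := Set.disjoint_iff_inter_eq_empty.2 hdisj
  exact ⟨Set.bijOn_union_of_disjoint hΔ,
    fun Γ₁ Γ₂ _ _ => c.closure_sup_closure Γ₁ Γ₂,
    fun _ _ _ _ => Set.union_subset_union_iff_of_subset_disjoint hΔ⟩
end

section
/- Let α be a type, c a closure operator on Set α, and F, G flocks that have no propositions in common: (⋃₀ F) ∩ (⋃₀ G) = ∅. Let F × G = {Δ ∪ Δ' | Δ ∈ F, Δ' ∈ G} be the merge of the flocks. Then the pure merge of the epistemic states generated by F and G is isomorphic to the epistemic state generated by F × G: the map (Γ, Φ) ↦ Γ ∪ Φ is a bijection from F↓ × G↓ onto (F × G)↓, it preserves labels, i.e. c (c Γ ∪ c Φ) = c (Γ ∪ Φ), and it is an order isomorphism: Γ ∪ Φ ⊆ Γ' ∪ Φ' ↔ (Γ ⊆ Γ' ∧ Φ ⊆ Φ') for all Γ, Γ' ∈ F↓ and Φ, Φ' ∈ G↓.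 -/
/-- The epistemic state generated by a flock `F`: its admissible belief states. -/
def flockDown {α : Type*} (F : Set (Set α)) : Set (Set α) :=
  {Γ : Set α | ∃ Δ ∈ F, Γ ⊆ Δ}

/-- The merge of two flocks: pairwise unions of their bases. -/
def flockMerge {α : Type*} (F G : Set (Set α)) : Set (Set α) :=
  {Θ : Set α | ∃ Δ ∈ F, ∃ Δ' ∈ G, Θ = Δ ∪ Δ'}

theorem sup_le_sup_iff_of_disjoint {L : Type*} [DistribLattice L] [OrderBot L] {a a' b b' : L}
    (hab' : Disjoint a b') (hba' : Disjoint b a') : a ⊔ b ≤ a' ⊔ b' ↔ a ≤ a' ∧ b ≤ b' :=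
  ⟨fun h => ⟨hab'.left_le_of_le_sup_right (le_sup_left.trans h),
      hba'.left_le_of_le_sup_left (le_sup_right.trans h)⟩,
    fun h => sup_le_sup h.1 h.2⟩

section Flock

variable {α : Type*} {F G : Set (Set α)} {Γ Γ' Φ Φ' : Set α}

theorem subset_sUnion_of_mem_flockDown (hΓ : Γ ∈ flockDown F) : Γ ⊆ ⋃₀ F := by
  obtain ⟨Δ, hΔ, hΓΔ⟩ := hΓ
  exact hΓΔ.trans (Set.subset_sUnion_of_mem hΔ)

theorem disjoint_of_mem_flockDown (hFG : Disjoint (⋃₀ F) (⋃₀ G))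
    (hΓ : Γ ∈ flockDown F) (hΦ : Φ ∈ flockDown G) : Disjoint Γ Φ :=
  hFG.mono (subset_sUnion_of_mem_flockDown hΓ) (subset_sUnion_of_mem_flockDown hΦ)

theorem union_mem_flockDown_flockMerge (hΓ : Γ ∈ flockDown F) (hΦ : Φ ∈ flockDown G) :
    Γ ∪ Φ ∈ flockDown (flockMerge F G) := by
  obtain ⟨Δ, hΔ, hΓΔ⟩ := hΓ
  obtain ⟨Δ', hΔ', hΦΔ'⟩ := hΦ
  exact ⟨Δ ∪ Δ', ⟨Δ, hΔ, Δ', hΔ', rfl⟩, Set.union_subset_union hΓΔ hΦΔ'⟩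

theorem exists_union_eq_of_mem_flockDown_flockMerge {Θ : Set α}
    (hΘ : Θ ∈ flockDown (flockMerge F G)) :
    ∃ Γ ∈ flockDown F, ∃ Φ ∈ flockDown G, Γ ∪ Φ = Θ := by
  obtain ⟨_, ⟨Δ, hΔ, Δ', hΔ', rfl⟩, hΘΔ⟩ := hΘ
  refine ⟨Θ ∩ Δ, ⟨Δ, hΔ, Set.inter_subset_right⟩, Θ ∩ Δ', ⟨Δ', hΔ', Set.inter_subset_right⟩, ?_⟩
  rw [← Set.inter_union_distrib_left, Set.inter_eq_self_of_subset_left hΘΔ]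

theorem union_subset_union_iff_of_mem_flockDown (hFG : Disjoint (⋃₀ F) (⋃₀ G))
    (hΓ : Γ ∈ flockDown F) (hΓ' : Γ' ∈ flockDown F)
    (hΦ : Φ ∈ flockDown G) (hΦ' : Φ' ∈ flockDown G) :
    Γ ∪ Φ ⊆ Γ' ∪ Φ' ↔ Γ ⊆ Γ' ∧ Φ ⊆ Φ' :=
  sup_le_sup_iff_of_disjoint (disjoint_of_mem_flockDown hFG hΓ hΦ')
    (disjoint_of_mem_flockDown hFG hΓ' hΦ).symm

theorem injOn_union_flockDown_prod (hFG : Disjoint (⋃₀ F) (⋃₀ G)) :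
    Set.InjOn (fun p : Set α × Set α => p.1 ∪ p.2) (flockDown F ×ˢ flockDown G) := by
  rintro ⟨Γ, Φ⟩ ⟨hΓ, hΦ⟩ ⟨Γ', Φ'⟩ ⟨hΓ', hΦ'⟩ heq
  obtain ⟨hΓΓ', hΦΦ'⟩ :=
    (union_subset_union_iff_of_mem_flockDown hFG hΓ hΓ' hΦ hΦ').mp heq.le
  obtain ⟨hΓ'Γ, hΦ'Φ⟩ :=
    (union_subset_union_iff_of_mem_flockDown hFG hΓ' hΓ hΦ' hΦ).mp heq.ge
  exact Prod.ext (hΓΓ'.antisymm hΓ'Γ) (hΦΦ'.antisymm hΦ'Φ)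

end Flock

/-- For flocks `F`, `G` with no propositions in common, the pure merge of
the epistemic states generated by `F` and `G` is isomorphic to the epistemic state
generated by the merged flock `F × G`: the map `(Γ, Φ) ↦ Γ ∪ Φ` is a bijection from
`F↓ × G↓` onto `(F × G)↓`, it preserves labels, and it is an order isomorphism. -/
theorem flock_merge_iso (α : Type*) (c : ClosureOperator (Set α))
    (F G : Set (Set α)) (hdisj : (⋃₀ F) ∩ (⋃₀ G) = ∅) :
    Set.BijOn (fun p : Set α × Set α => p.1 ∪ p.2)
        (flockDown F ×ˢ flockDown G) (flockDown (flockMerge F G)) ∧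
    (∀ Γ Φ : Set α, Γ ∈ flockDown F → Φ ∈ flockDown G →
      c (c Γ ∪ c Φ) = c (Γ ∪ Φ)) ∧
    (∀ Γ Γ' Φ Φ' : Set α, Γ ∈ flockDown F → Γ' ∈ flockDown F →
      Φ ∈ flockDown G → Φ' ∈ flockDown G →
      (Γ ∪ Φ ⊆ Γ' ∪ Φ' ↔ Γ ⊆ Γ' ∧ Φ ⊆ Φ')) := by
  have hFG : Disjoint (⋃₀ F) (⋃₀ G) := Set.disjoint_iff_inter_eq_empty.mpr hdisj
  refine ⟨⟨?mapsTo, injOn_union_flockDown_prod hFG, ?surjOn⟩,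
    fun Γ Φ _ _ => c.closure_sup_closure Γ Φ,
    fun _ _ _ _ => union_subset_union_iff_of_mem_flockDown hFG⟩
  case mapsTo =>
    rintro ⟨Γ, Φ⟩ ⟨hΓ, hΦ⟩
    exact union_mem_flockDown_flockMerge hΓ hΦ
  case surjOn =>
    intro Θ hΘ
    obtain ⟨Γ, hΓ, Φ, hΦ, rfl⟩ := exists_union_eq_of_mem_flockDown_flockMerge hΘ
    exact ⟨(Γ, Φ), ⟨hΓ, hΦ⟩, rfl⟩
end

section
/- Let L be a first-order language, ι a nonempty index type, T : ι → Set (L.Sentence) a family of deductively closed theories (for each i, T i = Th(T i)), and A an L-sentence. Then ⋂ i, Th(T i ∪ {A}) = Th((⋂ i, T i) ∪ {A}). -/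
open FirstOrder FirstOrder.Language

/-- The set of semantic consequences of a first-order theory. -/
def Th {L : FirstOrder.Language} (T : L.Theory) : L.Theory :=
  {φ : L.Sentence | T ⊨ᵇ φ}

namespace FirstOrder.Language.Theory

variable {L : Language} {T T' : L.Theory}

theorem models_union_singleton_iff {A φ : L.Sentence} :
    T ∪ {A} ⊨ᵇ φ ↔ T ⊨ᵇ A.imp φ := by
  refine ⟨fun h => models_sentence_iff.2 fun M => ?_, fun h => models_sentence_iff.2 fun M => ?_⟩
  · rw [Sentence.realize_imp]
    intro hA
    have : (M : Type _) ⊨ T ∪ {A} := model_union_iff.2 ⟨M.is_model, model_singleton_iff.2 hA⟩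
    exact h.realize_sentence M
  · have : (M : Type _) ⊨ T := M.is_model.mono Set.subset_union_left
    exact (Sentence.realize_imp _).1 (h.realize_sentence M)
      (realize_sentence_of_mem (T ∪ {A}) (Set.mem_union_right _ rfl))

theorem ModelsBoundedFormula.mono {φ : L.Sentence} (hT : T ⊆ T') (h : T ⊨ᵇ φ) : T' ⊨ᵇ φ :=
  models_of_models_theory (fun _ hψ => models_sentence_of_mem (hT hψ)) h

end FirstOrder.Language.Theory

open Theory

section

variable {L : Language} {T T' : L.Theory}

theorem subset_Th : T ⊆ Th T := fun _ => models_sentence_of_mem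

theorem Th_mono (h : T ⊆ T') : Th T ⊆ Th T' := fun _ => ModelsBoundedFormula.mono h

theorem mem_Th_union_singleton_iff {A φ : L.Sentence} : φ ∈ Th (T ∪ {A}) ↔ A.imp φ ∈ Th T :=
  models_union_singleton_iff

end

theorem iInter_th_insert_general (L : FirstOrder.Language) (ι : Type*)
    (T : ι → L.Theory) (hT : ∀ i, T i = Th (T i)) (A : L.Sentence) :
    (⋂ i, Th (T i ∪ {A})) = Th ((⋂ i, T i) ∪ {A}) := by
  refine subset_antisymm (fun φ hφ => ?_) <|
    Set.subset_iInter fun i => Th_mono (Set.union_subset_union_left _ (Set.iInter_subset T i))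
  have himp : A.imp φ ∈ ⋂ i, T i := Set.mem_iInter.2 fun i => by
    rw [hT i]
    exact mem_Th_union_singleton_iff.1 (Set.mem_iInter.1 hφ i)
  exact mem_Th_union_singleton_iff.2 (subset_Th himp)

/-- For a nonempty family of deductively closed theories `T i` and a
sentence `A`, the intersection of the consequence sets `Th (T i ∪ {A})` equals
`Th ((⋂ i, T i) ∪ {A})`. -/
theorem iInter_th_insert (L : FirstOrder.Language) (ι : Type*) [Nonempty ι]
    (T : ι → L.Theory) (hT : ∀ i, T i = Th (T i)) (A : L.Sentence) :
    (⋂ i, Th (T i ∪ {A})) = Th ((⋂ i, T i) ∪ {A}) :=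
  iInter_th_insert_general L ι T hT A
end
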